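/- In the stochastic network N₂ with ε ≥ 3/2, the worst-case social cost under belief μ ∈ [0,1] is Ψ^μ_ε = max(3/2, 1 + μ), and for any prior ν ∈ (0,1) (probability of ω = 1), full revelation of the state is strictly worse than no revelation whenever ν < 1/2 (since ν·Ψ¹ + (1−ν)·Ψ⁰ = ν·2 + (1−ν)·(3/2) = 3/2 + ν/2 > 3/2 = Ψ^ν when ν < 1/2); indeed for ε ≥ 3/2, μ ↦ Ψ^μ_ε is convex so no revelation is optimal. -/
import Mathlib


/-- Expected social cost in network N₂ of the flow `(1 - y, y)` under belief `μ`. -/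
noncomputable def n2SC (μ y : ℝ) : ℝ := (1 - y) * ((1 - y) + 1/2) + y * (y + μ)

/-- `(1 - y, y)` is an `ε`-BRUE under belief `μ`. -/
def n2BRUE (μ ε y : ℝ) : Prop :=
  0 ≤ y ∧ y ≤ 1 ∧ (y < 1 → (1 - y) + 1/2 ≤ (y + μ) + ε) ∧
    (0 < y → (y + μ) ≤ (1 - y) + 1/2 + ε)

/-- Worst-case expected social cost `Ψ^μ_ε` over `ε`-BRUE flows. -/
noncomputable def n2Psi (μ ε : ℝ) : ℝ :=
  sSup {z | ∃ y, n2BRUE μ ε y ∧ z = n2SC μ y}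

lemma n2Psi_eq (ε : ℝ) (hε : 3/2 ≤ ε) (μ : ℝ) (hμ : μ ∈ Set.Icc (0:ℝ) 1) :
    n2Psi μ ε = max (3/2) (1 + μ) := by
  obtain ⟨hμ0, hμ1⟩ := hμ
  have hgreat : IsGreatest {z | ∃ y, n2BRUE μ ε y ∧ z = n2SC μ y} (max (3/2) (1 + μ)) := by
    constructor
    · rcases le_total (1 + μ) (3/2) with h | h
      · refine ⟨0, ⟨le_refl 0, by norm_num, fun _ => by nlinarith, fun h0 => absurd h0 (lt_irrefl 0)⟩, ?_⟩
        rw [max_eq_left h]; norm_num [n2SC]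
      · refine ⟨1, ⟨by norm_num, le_refl 1, fun h1 => absurd h1 (lt_irrefl 1), fun _ => by nlinarith⟩, ?_⟩
        rw [max_eq_right h]; norm_num [n2SC]
    · rintro z ⟨y, ⟨hy0, hy1, _, _⟩, rfl⟩
      have key : n2SC μ y ≤ (1 - y) * (3/2) + y * (1 + μ) := by
        simp only [n2SC]; nlinarith
      rcases le_total (1 + μ) (3/2) with h | h
      · rw [max_eq_left h]; nlinarith
      · rw [max_eq_right h]; nlinarith
  exact hgreat.csSup_eq

theorem stmt17 (ε : ℝ) (hε : 3/2 ≤ ε) :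
    (∀ μ ∈ Set.Icc (0:ℝ) 1, n2Psi μ ε = max (3/2) (1 + μ)) ∧
    -- full revelation is strictly worse than no revelation when ν < 1/2
    (∀ ν ∈ Set.Ioo (0:ℝ) 1, ν < 1/2 →
      n2Psi 1 ε = 2 ∧ n2Psi 0 ε = 3/2 ∧
      n2Psi ν ε < ν * n2Psi 1 ε + (1 - ν) * n2Psi 0 ε) ∧
    -- μ ↦ Ψ^μ_ε is convex, so no revelation is optimal
    ConvexOn ℝ (Set.Icc (0:ℝ) 1) (fun μ => n2Psi μ ε) := by
  have h1 : n2Psi 1 ε = 2 := by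
    rw [n2Psi_eq ε hε 1 (by norm_num)]; norm_num
  have h0 : n2Psi 0 ε = 3/2 := by
    rw [n2Psi_eq ε hε 0 (by norm_num)]; norm_num
  refine ⟨n2Psi_eq ε hε, ?_, ?_⟩
  · rintro ν ⟨hν0, hν1⟩ hν
    refine ⟨h1, h0, ?_⟩
    rw [h1, h0, n2Psi_eq ε hε ν ⟨hν0.le, hν1.le⟩, max_eq_left (by linarith)]
    linarith
  · refine ⟨convex_Icc 0 1, ?_⟩
    intro x hx y hy a b ha hb hab
    have hmem : a • x + b • y ∈ Set.Icc (0:ℝ) 1 := (convex_Icc 0 1) hx hy ha hb hab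
    simp only [smul_eq_mul] at hmem ⊢
    rw [n2Psi_eq ε hε _ hmem, n2Psi_eq ε hε _ hx, n2Psi_eq ε hε _ hy]
    apply max_le
    · have : a * (3/2) + b * (3/2) ≤ a * max (3/2) (1 + x) + b * max (3/2) (1 + y) := by
        gcongr <;> [exact le_max_left _ _; exact le_max_left _ _]
      linarith [this]
    · have : a * (1 + x) + b * (1 + y) ≤ a * max (3/2) (1 + x) + b * max (3/2) (1 + y) := by
        gcongr <;> [exact le_max_right _ _; exact le_max_right _ _]
      nlinarith [this]
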